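/- The Parikh image of a regular language is semilinear (Parikh's theorem for regular languages): for any regular language R over an alphabet {a₁,...,a_k}, the set Par(R) ⊆ ℕ^k is a finite union of linear sets. -/

import Mathlib

/-- Parikh vector of a word over a `k`-letter alphabet. -/
def Par {k : ℕ} (w : List (Fin k)) : Fin k → ℕ := fun i => w.count i

/-- The linear set with base `b` and periods `ps`. -/
def LinSet {k : ℕ} (b : Fin k → ℕ) (ps : List (Fin k → ℕ)) : Set (Fin k → ℕ) :=
  {v | ∃ lam : Fin ps.length → ℕ, v = b + ∑ i, lam i • ps.get i}

/-- The semilinear set described by a finite list of (base, periods) pairs. -/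
def SemiSet {k : ℕ} (d : List ((Fin k → ℕ) × List (Fin k → ℕ))) : Set (Fin k → ℕ) :=
  {v | ∃ p ∈ d, v ∈ LinSet p.1 p.2}

/-- A set is semilinear if it is a finite union of linear sets. -/
def IsSemilinear {k : ℕ} (S : Set (Fin k → ℕ)) : Prop := ∃ d, S = SemiSet d

/-!
Kleene's state elimination: the words leading from `p` to `q` through intermediate states in
`F ∪ {r}` are `R_F(p,q) ∪ R_F(p,r) R_F(r,r)* R_F(r,q)`, and for `F = ∅` they have length at most
one. A map from words to a commutative monoid turning concatenation into addition sends union,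
concatenation and star to union, sumset and generated submonoid, all of which preserve
semilinearity; the Parikh map is such a map into `ℕ^k`.
-/

open Set Pointwise Computability

namespace DFA

variable {α σ : Type*} (M : DFA α σ)

/-- Kleene's `R_F(p,q)`; the endpoints `p` and `q` themselves need not lie in `F`. -/
def pathsVia (F : Set σ) (p q : σ) : Language α :=
  {w | M.evalFrom p w = q ∧ ∀ u v, u ++ v = w → u ≠ [] → v ≠ [] → M.evalFrom p u ∈ F}

variable {M} {F G : Set σ} {p q r : σ} {u v w : List α}

theorem pathsVia_mono (h : F ⊆ G) : M.pathsVia F p q ≤ M.pathsVia G p q :=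
  fun _ hw => ⟨hw.1, fun u v huv hu hv => h (hw.2 u v huv hu hv)⟩

theorem pathsVia_univ : M.pathsVia univ p q = {w | M.evalFrom p w = q} := by
  ext w
  simp [pathsVia]

theorem length_le_one_of_mem_pathsVia_empty (hw : w ∈ M.pathsVia ∅ p q) : w.length ≤ 1 := by
  match w, hw with
  | [], _ | [_], _ => simp
  | a :: b :: _, hw => exact absurd (hw.2 [a] (b :: _) rfl (by simp) (by simp)) (notMem_empty _)

theorem append_mem_pathsVia (hu : u ∈ M.pathsVia F p r) (hv : v ∈ M.pathsVia F r q)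
    (hr : r ∈ F) : u ++ v ∈ M.pathsVia F p q := by
  refine ⟨by rw [evalFrom_of_append, hu.1, hv.1], fun x y hxy hx hy => ?_⟩
  rcases List.append_eq_append_iff.mp hxy with ⟨a, rfl, rfl⟩ | ⟨c, rfl, rfl⟩
  · rcases eq_or_ne a [] with rfl | ha
    · rw [List.append_nil] at hu
      rwa [hu.1]
    · exact hu.2 x a rfl hx ha
  · rw [evalFrom_of_append, hu.1]
    rcases eq_or_ne c [] with rfl | hc
    · simpa using hr
    · exact hv.2 c y rfl hc hy

theorem mem_pathsVia_of_append_mem (h : u ++ v ∈ M.pathsVia F p q) :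
    u ∈ M.pathsVia F p (M.evalFrom p u) ∧ v ∈ M.pathsVia F (M.evalFrom p u) q := by
  refine ⟨⟨rfl, fun x y hxy hx hy => h.2 x (y ++ v) (by rw [← List.append_assoc, hxy]) hx
    (by simp [hy])⟩, ⟨by rw [← evalFrom_of_append, h.1], fun x y hxy hx hy => ?_⟩⟩
  rw [← evalFrom_of_append]
  exact h.2 (u ++ x) y (by rw [List.append_assoc, hxy]) (by simp [hx]) hy

theorem mul_pathsVia_le (hr : r ∈ F) :
    M.pathsVia F p r * M.pathsVia F r q ≤ M.pathsVia F p q := by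
  rintro _ ⟨u, hu, v, hv, rfl⟩
  exact append_mem_pathsVia hu hv hr

theorem kstar_pathsVia_le (hr : r ∈ F) : (M.pathsVia F r r)∗ ≤ M.pathsVia F r r :=
  kstar_le_of_mul_le_left (by rw [Language.one_def]; rintro _ rfl; exact ⟨rfl, by simp⟩)
    (mul_pathsVia_le hr)

theorem mem_of_mem_pathsVia_insert {p q : σ} {w : List α}
    (hw : w ∈ M.pathsVia (insert r F) p q) :
    w ∈ M.pathsVia F p q + M.pathsVia F p r * (M.pathsVia F r r)∗ * M.pathsVia F r q := by
  set A := M.pathsVia F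
  by_cases hsplit : ∃ u v, u ++ v = w ∧ u ≠ [] ∧ v ≠ [] ∧ M.evalFrom p u = r
  · -- Any visit to `r` will do: both halves are shorter, and `(A r r)∗ * (A r r)∗ = (A r r)∗`.
    obtain ⟨u, v, rfl, hu, hv, hur⟩ := hsplit
    obtain ⟨hpr, hrq⟩ := mem_pathsVia_of_append_mem hw
    rw [hur] at hpr hrq
    have hleft : A p r + A p r * (A r r)∗ * A r r ≤ A p r * (A r r)∗ :=
      sup_le (le_mul_of_one_le_right' one_le_kstar)
        (by rw [mul_assoc]; exact mul_le_mul_right kstar_mul_le_kstar _)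
    have hright : A r q + A r r * (A r r)∗ * A r q ≤ (A r r)∗ * A r q :=
      sup_le (le_mul_of_one_le_left' one_le_kstar) (mul_le_mul_left mul_kstar_le_kstar _)
    have hu' := hleft (mem_of_mem_pathsVia_insert hpr)
    have hv' := hright (mem_of_mem_pathsVia_insert hrq)
    right
    rw [mul_assoc, ← kstar_mul_kstar, mul_assoc, ← mul_assoc]
    exact Language.append_mem_mul hu' hv'
  · push Not at hsplit
    exact .inl ⟨hw.1, fun u v huv hu hv =>
      (mem_insert_iff.mp (hw.2 u v huv hu hv)).resolve_left (hsplit u v huv hu hv)⟩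
termination_by w.length
decreasing_by all_goals subst_vars; simp [List.length_pos_iff, *]

theorem pathsVia_insert : M.pathsVia (insert r F) p q =
    M.pathsVia F p q + M.pathsVia F p r * (M.pathsVia F r r)∗ * M.pathsVia F r q := by
  refine le_antisymm (fun _ => mem_of_mem_pathsVia_insert)
    (sup_le (pathsVia_mono (subset_insert r F)) ?_)
  have hr : r ∈ insert r F := mem_insert r F
  calc M.pathsVia F p r * (M.pathsVia F r r)∗ * M.pathsVia F r q
      ≤ M.pathsVia (insert r F) p r * M.pathsVia (insert r F) r r *
          M.pathsVia (insert r F) r q := by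
        gcongr
        · exact pathsVia_mono (subset_insert r F)
        · exact (kstar_mono (pathsVia_mono (subset_insert r F))).trans (kstar_pathsVia_le hr)
        · exact pathsVia_mono (subset_insert r F)
    _ ≤ M.pathsVia (insert r F) p q :=
        (mul_le_mul_left (mul_pathsVia_le hr) _).trans (mul_pathsVia_le hr)

end DFA

section Image

variable {α N : Type*} {f : List α → N}

theorem Language.image_add (L₁ L₂ : Language α) :
    f '' (L₁ + L₂ : Language α) = f '' L₁ ∪ f '' L₂ :=
  image_union f L₁ L₂

variable [AddCommMonoid N]

theorem Language.image_mul_of_map_append (hf : ∀ u v, f (u ++ v) = f u + f v)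
    (L₁ L₂ : Language α) :
    f '' (L₁ * L₂ : Language α) = f '' L₁ + f '' L₂ := by
  ext x
  constructor
  · rintro ⟨_, hw, rfl⟩
    obtain ⟨u, hu, v, hv, rfl⟩ := Language.mem_mul.mp hw
    exact ⟨f u, ⟨u, hu, rfl⟩, f v, ⟨v, hv, rfl⟩, (hf u v).symm⟩
  · rintro ⟨_, ⟨u, hu, rfl⟩, _, ⟨v, hv, rfl⟩, rfl⟩
    exact ⟨u ++ v, Language.append_mem_mul hu hv, hf u v⟩

theorem Language.image_kstar_of_map_append (hf₀ : f [] = 0) (hf : ∀ u v, f (u ++ v) = f u + f v)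
    (L : Language α) : f '' (L∗ : Language α) = AddSubmonoid.closure (f '' L) := by
  refine Subset.antisymm ?_ fun x hx => ?_
  · rintro _ ⟨_, hw, rfl⟩
    obtain ⟨ws, rfl, hws⟩ := Language.mem_kstar.mp hw
    clear hw
    induction ws with
    | nil => simp [hf₀]
    | cons w ws ih =>
      rw [List.flatten_cons, hf]
      exact add_mem
        (AddSubmonoid.subset_closure (mem_image_of_mem f (hws w List.mem_cons_self)))
        (ih fun y hy => hws y (List.mem_cons_of_mem _ hy))
  · induction hx using AddSubmonoid.closure_induction with
    | mem x hx =>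
      obtain ⟨w, hw, rfl⟩ := hx
      have hL : L ≤ L∗ := le_kstar
      exact ⟨w, hL hw, rfl⟩
    | zero => exact ⟨[], Language.nil_mem_kstar L, hf₀⟩
    | add x y _ _ hx hy =>
      obtain ⟨u, hu, rfl⟩ := hx
      obtain ⟨v, hv, rfl⟩ := hy
      exact ⟨u ++ v, kstar_mul_kstar L ▸ Language.append_mem_mul hu hv, hf u v⟩

theorem DFA.isSemilinearSet_image_pathsVia [Finite α] {σ : Type*} (M : DFA α σ)
    (hf₀ : f [] = 0) (hf : ∀ u v, f (u ++ v) = f u + f v) (F : Finset σ) (p q : σ) :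
    IsSemilinearSet (f '' M.pathsVia F p q) := by
  classical
  induction F using Finset.induction_on generalizing p q with
  | empty =>
    refine .of_finite (((List.finite_length_le α 1).subset fun w hw => ?_).image f)
    rw [Finset.coe_empty] at hw
    exact DFA.length_le_one_of_mem_pathsVia_empty hw
  | insert r F _ ih =>
    rw [Finset.coe_insert, DFA.pathsVia_insert, Language.image_add,
      Language.image_mul_of_map_append hf, Language.image_mul_of_map_append hf,
      Language.image_kstar_of_map_append hf₀ hf]
    exact (ih p q).union (((ih p r).add (ih r r).closure).add (ih r q))

theorem Language.IsRegular.isSemilinearSet_image [Finite α] {L : Language α} (hL : L.IsRegular)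
    (hf₀ : f [] = 0) (hf : ∀ u v, f (u ++ v) = f u + f v) : IsSemilinearSet (f '' L) := by
  obtain ⟨σ, _, M, rfl⟩ := hL
  have hacc : f '' M.accepts =
      ⋃ q ∈ M.accept, f '' M.pathsVia (Finset.univ : Finset σ) M.start q := by
    ext x
    simp [DFA.pathsVia_univ, DFA.accepts, DFA.acceptsFrom]
  rw [hacc]
  exact .biUnion (toFinite _) fun q _ => M.isSemilinearSet_image_pathsVia hf₀ hf _ _ _

end Image

section Parikh

variable {k : ℕ}

theorem linSet_eq_vadd_closure (b : Fin k → ℕ) (ps : List (Fin k → ℕ)) :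
    LinSet b ps = b +ᵥ (AddSubmonoid.closure {x | x ∈ ps} : Set (Fin k → ℕ)) := by
  ext v
  rw [← range_list_get, mem_vadd_set]
  simp only [SetLike.mem_coe, AddSubmonoid.mem_closure_range_iff_of_fintype, LinSet,
    mem_ofPred_eq, vadd_eq_add]
  constructor
  · rintro ⟨lam, rfl⟩
    exact ⟨_, ⟨lam, rfl⟩, rfl⟩
  · rintro ⟨_, ⟨lam, rfl⟩, rfl⟩
    exact ⟨lam, rfl⟩

theorem IsLinearSet.exists_eq_linSet {t : Set (Fin k → ℕ)} (ht : IsLinearSet t) :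
    ∃ b ps, t = LinSet b ps := by
  obtain ⟨b, s, rfl⟩ := isLinearSet_iff.mp ht
  exact ⟨b, s.toList, by simp [linSet_eq_vadd_closure]⟩

theorem IsSemilinearSet.isSemilinear {S : Set (Fin k → ℕ)} (hS : IsSemilinearSet S) :
    IsSemilinear S := by
  obtain ⟨T, hT, rfl⟩ := isSemilinearSet_iff.mp hS
  choose! base periods hlin using fun t ht => (hT t ht).exists_eq_linSet
  refine ⟨T.toList.map fun t => (base t, periods t), ?_⟩
  ext v
  simp only [SemiSet, mem_sUnion, mem_ofPred_eq, List.mem_map, Finset.mem_toList]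
  constructor
  · rintro ⟨t, ht, hv⟩
    exact ⟨_, ⟨t, ht, rfl⟩, hlin t ht ▸ hv⟩
  · rintro ⟨_, ⟨t, ht, rfl⟩, hv⟩
    exact ⟨t, ht, (hlin t ht).symm ▸ hv⟩

theorem par_nil : Par ([] : List (Fin k)) = 0 := by
  funext
  simp [Par]

theorem par_append (u v : List (Fin k)) : Par (u ++ v) = Par u + Par v := by
  funext
  simp [Par]

end Parikh

/-- Parikh's theorem for regular languages: the Parikh image of any
regular language over a `k`-letter alphabet is semilinear. -/
theorem parikh_image_of_regular_is_semilinear {k : ℕ} (R : Language (Fin k))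
    (hR : R.IsRegular) : IsSemilinear (Par '' R) :=
  (hR.isSemilinearSet_image par_nil par_append).isSemilinear
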